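/- Let k ≥ 1, let G be a k-edge-connected finite simple graph on V, fix a root r ∈ V, and let Q be a finite collection of snug chains of G. Let F be a set of unordered pairs of distinct vertices (links) such that: (a) for every chain in Q with k-cuts S₀, …, S_{t+1}, each S_i (i = 0, …, t+1) is crossed by some link in F; and (b) every k-cut S of G such that, for every chain in Q with snug vertices u₀, …, u_t, the set {u₀, …, u_t} is either entirely contained in S or disjoint from S, is crossed by some link in F. Then every k-cut of G is crossed by some link in F. -/

import Mathlib

/-!
The cut function `S ↦ |δ(S)|` is symmetric, submodular and posimodular, and a snug vertex `v`
has `|δ({v})| > k`. Uncrossing a `k`-cut `T` that avoids the root with the snug shores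
`(A, A ∪ {v})` shows that `v ∈ T` forces `A ⊆ T`, while `A ⊆ T` and `v ∉ T` force `T = A`.
Along a snug chain this pins down every `k`-cut avoiding the root that contains some but not
all of the chain's vertices: it is the last shore `Sᵢ` it contains. A `k`-cut containing the
root is handled through its complement, which has the same crossing links. So every `k`-cut
either splits no chain, and is covered by (b), or is a shore of a chain, covered by (a).
-/

open Finset

variable {V : Type*} [Fintype V] [DecidableEq V]

/-- `Crosses S e`: exactly one endpoint of the edge/link `e` lies in `S`. -/
def Crosses (S : Finset V) (e : Sym2 V) : Prop :=
  ∃ x y : V, e = s(x, y) ∧ x ∈ S ∧ y ∉ S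

instance (S : Finset V) : DecidablePred (Crosses S) := fun e =>
  decidable_of_iff (∃ x y : V, e = s(x, y) ∧ x ∈ S ∧ y ∉ S) Iff.rfl

/-- The cut `δ(S)`: edges of `G` with exactly one endpoint in `S`. -/
def cutEdges (G : SimpleGraph V) [DecidableRel G.Adj] (S : Finset V) :
    Finset (Sym2 V) :=
  G.edgeFinset.filter fun e => Crosses S e

/-- `G` is `k`-edge-connected: every nonempty proper cut has at least `k` crossing edges. -/
def EdgeConnected (G : SimpleGraph V) [DecidableRel G.Adj] (k : ℕ) : Prop :=
  ∀ S : Finset V, S.Nonempty → S ≠ Finset.univ → k ≤ (cutEdges G S).card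

/-- `S` is a `k`-cut: a nonempty proper vertex set with exactly `k` crossing edges. -/
def IsCut (G : SimpleGraph V) [DecidableRel G.Adj] (k : ℕ) (S : Finset V) : Prop :=
  S.Nonempty ∧ S ≠ Finset.univ ∧ (cutEdges G S).card = k

/-- `(S₁, S₂)` are snug shores for `v` (with respect to the root `r`):
two `k`-cuts avoiding `r` with `v ∉ S₁` and `S₂ = S₁ ∪ {v}`. -/
def SnugShores (G : SimpleGraph V) [DecidableRel G.Adj] (k : ℕ) (r v : V)
    (S₁ S₂ : Finset V) : Prop :=
  IsCut G k S₁ ∧ IsCut G k S₂ ∧ r ∉ S₁ ∧ r ∉ S₂ ∧ v ∉ S₁ ∧ S₂ = insert v S₁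

/-- `v` is a snug vertex (with respect to the root `r`). -/
def Snug (G : SimpleGraph V) [DecidableRel G.Adj] (k : ℕ) (r v : V) : Prop :=
  v ≠ r ∧ k + 1 ≤ G.degree v ∧ ∃ S₁ S₂ : Finset V, SnugShores G k r v S₁ S₂

/-- A snug chain: snug vertices `u 0, …, u t` together with `k`-cuts
`S 0, …, S (t+1)` such that `(S i, S (i+1))` are snug shores for `u i`. -/
def IsSnugChain (G : SimpleGraph V) [DecidableRel G.Adj] (k : ℕ) (r : V)
    (t : ℕ) (u : ℕ → V) (S : ℕ → Finset V) : Prop :=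
  ∀ i ≤ t, Snug G k r (u i) ∧ SnugShores G k r (u i) (S i) (S (i + 1))

omit [Fintype V] [DecidableEq V] in
theorem crosses_mk_iff {S : Finset V} {x y : V} :
    Crosses S s(x, y) ↔ (x ∈ S ∧ y ∉ S) ∨ (y ∈ S ∧ x ∉ S) := by
  constructor
  · rintro ⟨a, b, hab, ha, hb⟩
    rcases Sym2.eq_iff.mp hab with ⟨rfl, rfl⟩ | ⟨rfl, rfl⟩
    exacts [Or.inl ⟨ha, hb⟩, Or.inr ⟨ha, hb⟩]
  · rintro (⟨hx, hy⟩ | ⟨hy, hx⟩)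
    exacts [⟨x, y, rfl, hx, hy⟩, ⟨y, x, Sym2.eq_swap, hy, hx⟩]

theorem crosses_compl {S : Finset V} {e : Sym2 V} : Crosses Sᶜ e ↔ Crosses S e := by
  induction e using Sym2.ind with
  | _ x y => simp only [crosses_mk_iff, mem_compl]; tauto

section Cuts

variable (G : SimpleGraph V) [DecidableRel G.Adj]

theorem cutEdges_compl (S : Finset V) : cutEdges G Sᶜ = cutEdges G S :=
  filter_congr fun _ _ => crosses_compl

theorem card_cutEdges_inter_add_card_cutEdges_union_le (X Y : Finset V) :
    (cutEdges G (X ∩ Y)).card + (cutEdges G (X ∪ Y)).card ≤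
      (cutEdges G X).card + (cutEdges G Y).card := by
  simp only [cutEdges, card_filter, ← sum_add_distrib]
  refine sum_le_sum fun e _ => ?_
  induction e using Sym2.ind with
  | _ x y =>
    simp only [crosses_mk_iff, mem_inter, mem_union]
    by_cases x ∈ X <;> by_cases x ∈ Y <;> by_cases y ∈ X <;> by_cases y ∈ Y <;> simp_all

theorem card_cutEdges_sdiff_add_card_cutEdges_sdiff_le (X Y : Finset V) :
    (cutEdges G (X \ Y)).card + (cutEdges G (Y \ X)).card ≤
      (cutEdges G X).card + (cutEdges G Y).card := by
  have hunion : X ∪ Yᶜ = (Y \ X)ᶜ := by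
    ext
    simp only [mem_union, mem_compl, mem_sdiff]
    tauto
  have h := card_cutEdges_inter_add_card_cutEdges_union_le G X Yᶜ
  rwa [← sdiff_eq_inter_compl, hunion, cutEdges_compl, cutEdges_compl] at h

theorem degree_le_card_cutEdges_singleton (v : V) : G.degree v ≤ (cutEdges G {v}).card := by
  rw [← G.card_neighborFinset_eq_degree]
  refine card_le_card_of_injOn (fun w => s(v, w)) (fun w hw => ?_)
    fun _ _ _ _ h => Sym2.congr_right.mp h
  rw [mem_coe, SimpleGraph.mem_neighborFinset] at hw
  simp only [mem_coe, cutEdges, mem_filter, SimpleGraph.mem_edgeFinset,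
    SimpleGraph.mem_edgeSet, crosses_mk_iff, mem_singleton]
  exact ⟨hw, Or.inl ⟨trivial, hw.ne'⟩⟩

variable {G} {k : ℕ}

theorem IsCut.compl {S : Finset V} (h : IsCut G k S) : IsCut G k Sᶜ :=
  ⟨nonempty_iff_ne_empty.mpr ((compl_eq_empty_iff S).not.mpr h.2.1),
    (compl_ne_univ_iff_nonempty S).mpr h.1, (cutEdges_compl G S).symm ▸ h.2.2⟩

end Cuts

section Snug

variable {G : SimpleGraph V} [DecidableRel G.Adj] {k : ℕ} {r v : V} {A T : Finset V}

theorem SnugShores.subset_of_mem (hG : EdgeConnected G k)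
    (hA : SnugShores G k r v A (insert v A)) (hv : k < (cutEdges G {v}).card)
    (hT : IsCut G k T) (hrT : r ∉ T) (hvT : v ∈ T) : A ⊆ T := by
  obtain ⟨⟨-, -, hδA⟩, ⟨-, -, hδB⟩, hrA, hrB, hvA, -⟩ := hA
  -- `X = T ∩ (A ∪ {v})` has cut value at most `k` and `X \ A = {v}`, so posimodularity of `X`
  -- and `A`, with `|δ({v})| > k`, gives `|δ(A \ T)| < k`
  have hX : (cutEdges G (T ∩ insert v A)).card ≤ k := by
    have := card_cutEdges_inter_add_card_cutEdges_union_le G T (insert v A)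
    have := hG _ ⟨v, mem_union_left _ hvT⟩ fun h =>
      (mem_union.mp (h ▸ mem_univ r)).elim hrT hrB
    have := hT.2.2
    omega
  have hXA : (T ∩ insert v A) \ A = {v} := by
    ext w
    simp only [mem_sdiff, mem_inter, mem_insert, mem_singleton]
    constructor
    · rintro ⟨⟨-, rfl | hw⟩, hwA⟩ <;> tauto
    · rintro rfl
      exact ⟨⟨hvT, Or.inl rfl⟩, hvA⟩
  have hAX : A \ (T ∩ insert v A) = A \ T := by
    ext w
    simp only [mem_sdiff, mem_inter, mem_insert]
    tauto
  have := card_cutEdges_sdiff_add_card_cutEdges_sdiff_le G (T ∩ insert v A) A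
  rw [hXA, hAX] at this
  by_contra hAT
  have := hG (A \ T) (sdiff_nonempty.mpr hAT) fun h => hrA (mem_sdiff.mp (h ▸ mem_univ r)).1
  omega

theorem SnugShores.eq_of_subset_of_notMem (hG : EdgeConnected G k)
    (hA : SnugShores G k r v A (insert v A)) (hv : k < (cutEdges G {v}).card)
    (hT : IsCut G k T) (hAT : A ⊆ T) (hvT : v ∉ T) : T = A := by
  have hδB := hA.2.1.2.2
  have hinter : Tᶜ ∩ insert v A = {v} := by
    ext w
    simp only [mem_inter, mem_compl, mem_insert, mem_singleton]
    constructor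
    · rintro ⟨hwT, rfl | hwA⟩
      exacts [rfl, absurd (hAT hwA) hwT]
    · rintro rfl
      exact ⟨hvT, Or.inl rfl⟩
  have hunion : Tᶜ ∪ insert v A = univ := by
    by_contra hne
    have := card_cutEdges_inter_add_card_cutEdges_union_le G Tᶜ (insert v A)
    rw [hinter, cutEdges_compl] at this
    have := hG _ ⟨v, mem_union_right _ (mem_insert_self v A)⟩ hne
    have := hT.2.2
    omega
  refine Subset.antisymm (fun w hwT => ?_) hAT
  have hw := hunion ▸ mem_univ w
  simp only [mem_union, mem_compl, mem_insert] at hw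
  rcases hw with hw | rfl | hw
  exacts [absurd hwT hw, absurd hwT hvT, hw]

end Snug

namespace IsSnugChain

variable {G : SimpleGraph V} [DecidableRel G.Adj] {k : ℕ} {r : V} {t : ℕ} {u : ℕ → V}
  {S : ℕ → Finset V}

theorem succ_eq_insert (hc : IsSnugChain G k r t u S) {i : ℕ} (hi : i ≤ t) :
    S (i + 1) = insert (u i) (S i) :=
  (hc i hi).2.2.2.2.2.2

theorem snugShores (hc : IsSnugChain G k r t u S) {i : ℕ} (hi : i ≤ t) :
    SnugShores G k r (u i) (S i) (insert (u i) (S i)) :=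
  hc.succ_eq_insert hi ▸ (hc i hi).2

theorem lt_card_cutEdges (hc : IsSnugChain G k r t u S) {i : ℕ} (hi : i ≤ t) :
    k < (cutEdges G {u i}).card :=
  (hc i hi).1.2.1.trans (degree_le_card_cutEdges_singleton G (u i))

theorem monotoneOn (hc : IsSnugChain G k r t u S) : MonotoneOn S (Set.Iic (t + 1)) :=
  monotoneOn_of_le_succ Set.ordConnected_Iic fun i _ _ hi => by
    rw [Order.succ_eq_add_one, Set.mem_Iic] at hi
    rw [Order.succ_eq_add_one, hc.succ_eq_insert (by omega)]
    exact subset_insert _ _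

theorem exists_eq_of_mem_of_notMem (hG : EdgeConnected G k) (hc : IsSnugChain G k r t u S)
    {T : Finset V} (hT : IsCut G k T) (hrT : r ∉ T) {a b : ℕ} (ha : a ≤ t) (hb : b ≤ t)
    (haT : u a ∈ T) (hbT : u b ∉ T) : ∃ i ≤ t + 1, T = S i := by
  have hsucc : ∀ i ≤ t, u i ∈ T → S (i + 1) ⊆ T := fun i hi hiT => by
    rw [hc.succ_eq_insert hi]
    exact insert_subset hiT
      ((hc.snugShores hi).subset_of_mem hG (hc.lt_card_cutEdges hi) hT hrT hiT)
  -- the last shore `S i` with `i ≤ b` that is contained in `T`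
  set i := Nat.findGreatest (fun i => S i ⊆ T) b
  have hib : i ≤ b := Nat.findGreatest_le b
  have hiT : S i ⊆ T :=
    Nat.findGreatest_spec (P := fun i => S i ⊆ T) (min_le_right a b)
      ((hc.monotoneOn (Set.mem_Iic.mpr (by omega)) (Set.mem_Iic.mpr (by omega))
        (by omega : min a b ≤ a + 1)).trans (hsucc a ha haT))
  have huiT : u i ∉ T := by
    rcases hib.lt_or_eq with hlt | hbi
    · exact fun huiT => Nat.findGreatest_is_greatest (Nat.lt_succ_self i) hlt
        (hsucc i (by omega) huiT)
    · exact hbi ▸ hbT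
  exact ⟨i, by omega,
    (hc.snugShores (hib.trans hb)).eq_of_subset_of_notMem hG
      (hc.lt_card_cutEdges (hib.trans hb)) hT hiT huiT⟩

theorem exists_eq_or_compl_eq (hG : EdgeConnected G k) (hc : IsSnugChain G k r t u S)
    {T : Finset V} (hT : IsCut G k T) {a b : ℕ} (ha : a ≤ t) (hb : b ≤ t)
    (haT : u a ∈ T) (hbT : u b ∉ T) : ∃ i ≤ t + 1, T = S i ∨ Tᶜ = S i := by
  by_cases hrT : r ∈ T
  · obtain ⟨i, hi, h⟩ := hc.exists_eq_of_mem_of_notMem hG hT.compl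
      (by simpa using hrT) hb ha (mem_compl.mpr hbT) (by simpa using haT)
    exact ⟨i, hi, Or.inr h⟩
  · obtain ⟨i, hi, h⟩ := hc.exists_eq_of_mem_of_notMem hG hT hrT ha hb haT hbT
    exact ⟨i, hi, Or.inl h⟩

end IsSnugChain

theorem cover_after_contracting_snug_chains_general
    (k : ℕ) (G : SimpleGraph V) [DecidableRel G.Adj]
    (hG : EdgeConnected G k) (r : V)
    (n : ℕ) (t : Fin n → ℕ) (u : Fin n → ℕ → V) (Sc : Fin n → ℕ → Finset V)
    (hchains : ∀ j : Fin n, IsSnugChain G k r (t j) (u j) (Sc j))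
    (F : Finset (Sym2 V))
    (ha : ∀ j : Fin n, ∀ i ≤ t j + 1, ∃ ℓ ∈ F, Crosses (Sc j i) ℓ)
    (hb : ∀ S : Finset V, IsCut G k S →
      (∀ j : Fin n, (∀ i ≤ t j, u j i ∈ S) ∨ (∀ i ≤ t j, u j i ∉ S)) →
      ∃ ℓ ∈ F, Crosses S ℓ) :
    ∀ S : Finset V, IsCut G k S → ∃ ℓ ∈ F, Crosses S ℓ := by
  intro S hS
  by_cases hsplit : ∀ j : Fin n, (∀ i ≤ t j, u j i ∈ S) ∨ (∀ i ≤ t j, u j i ∉ S)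
  · exact hb S hS hsplit
  push Not at hsplit
  obtain ⟨j, ⟨i₁, hi₁, hout⟩, i₂, hi₂, hin⟩ := hsplit
  obtain ⟨i, hi, hSi | hSi⟩ := (hchains j).exists_eq_or_compl_eq hG hS hi₂ hi₁ hin hout
  · exact hSi ▸ ha j i hi
  · obtain ⟨ℓ, hℓF, hℓ⟩ := ha j i hi
    exact ⟨ℓ, hℓF, crosses_compl.mp (hSi ▸ hℓ)⟩

/-- If a link set `F` covers all snug shores of every chain in a finite
collection `Q` of snug chains, and covers every `k`-cut not crossing any chain
in `Q`, then `F` covers every `k`-cut of `G`. -/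
theorem cover_after_contracting_snug_chains
    (k : ℕ) (hk : 1 ≤ k) (G : SimpleGraph V) [DecidableRel G.Adj]
    (hG : EdgeConnected G k) (r : V)
    (n : ℕ) (t : Fin n → ℕ) (u : Fin n → ℕ → V) (Sc : Fin n → ℕ → Finset V)
    (hchains : ∀ j : Fin n, IsSnugChain G k r (t j) (u j) (Sc j))
    (F : Finset (Sym2 V)) (hFd : ∀ ℓ ∈ F, ¬ ℓ.IsDiag)
    (ha : ∀ j : Fin n, ∀ i ≤ t j + 1, ∃ ℓ ∈ F, Crosses (Sc j i) ℓ)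
    (hb : ∀ S : Finset V, IsCut G k S →
      (∀ j : Fin n, (∀ i ≤ t j, u j i ∈ S) ∨ (∀ i ≤ t j, u j i ∉ S)) →
      ∃ ℓ ∈ F, Crosses S ℓ) :
    ∀ S : Finset V, IsCut G k S → ∃ ℓ ∈ F, Crosses S ℓ :=
  cover_after_contracting_snug_chains_general k G hG r n t u Sc hchains F ha hb
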